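/- Let d ≥ 1, γ > 1, 1 < s < ∞, 0 < t₀ < e^{−1}, and let η be a nonnegative Schwartz function on ℝ^d; set η_t(x) = t^{−d}·η(x/t) and a_γ(t) = t·(log(1/t))^{γ−1}. Then there is a constant C, depending only on d, γ, s and η, such that for every 0 < t < t₀, every x, y ∈ ℝ^d with |y − x| ≤ a_γ(t), and every nonnegative locally integrable function w, (η_t * w)(y) ≤ C·(log(1/t))^{d(γ−1)/s}·(M(w^s)(x))^{1/s}, where M is the Hardy–Littlewood maximal operator. -/

import Mathlib

open MeasureTheory Real Complex Metric Set
open scoped ENNReal NNReal FourierTransform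

noncomputable section

/-- `ℝ^d` with the Euclidean norm. -/
abbrev Rd (d : ℕ) := EuclideanSpace ℝ (Fin d)

/-- The logarithmic frequency scale `ρ(R) = R / (log R)^(γ-1)`. -/
def logScale (γ R : ℝ) : ℝ := R / Real.log R ^ (γ - 1)

/-- The spatial aperture `a_γ(t) = t (log(1/t))^(γ-1)`. -/
def aGamma (γ t : ℝ) : ℝ := t * Real.log (1 / t) ^ (γ - 1)

/-- Convolution on `ℝ^d`. -/
def convol {d : ℕ} (f g : Rd d → ℂ) (x : Rd d) : ℂ := ∫ y, f y * g (x - y)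

/-- `L¹`-normalized dilation `φ_t(x) = t^{-d} φ(x/t)`. -/
def dil {d : ℕ} (φ : Rd d → ℂ) (t : ℝ) (x : Rd d) : ℂ := ((t ^ d : ℝ))⁻¹ • φ ((t⁻¹ : ℝ) • x)

/-- The squared log-subdyadic square function `g_{log,γ,β}(f)(x)²`. -/
def gLogSq {d : ℕ} (γ β t₀ : ℝ) (φ f : Rd d → ℂ) (x : Rd d) : ℝ≥0∞ :=
  ∫⁻ t in Ioo (0:ℝ) t₀,
    (∫⁻ y in closedBall x (aGamma γ t), (‖convol f (dil φ t) y‖₊ : ℝ≥0∞) ^ 2) *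
      ENNReal.ofReal (aGamma γ t ^ (-(d:ℝ)) * Real.log (1/t) ^ (2*β) / t)

/-- The log-subdyadic square function `g_{log,γ,β}(f)(x)`. -/
def gLog {d : ℕ} (γ β t₀ : ℝ) (φ f : Rd d → ℂ) (x : Rd d) : ℝ≥0∞ :=
  gLogSq γ β t₀ φ f x ^ (2⁻¹ : ℝ)

/-- The squared robust log-subdyadic square function `g*_{log,γ,β,λ}(f)(x)²`. -/
def gStarLogSq {d : ℕ} (γ β lam t₀ : ℝ) (φ f : Rd d → ℂ) (x : Rd d) : ℝ≥0∞ :=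
  ∫⁻ t in Ioo (0:ℝ) t₀,
    (∫⁻ y, (‖convol f (dil φ t) y‖₊ : ℝ≥0∞) ^ 2 *
        ENNReal.ofReal ((1 + dist x y / aGamma γ t) ^ (-(d:ℝ) * lam))) *
      ENNReal.ofReal (aGamma γ t ^ (-(d:ℝ)) * Real.log (1/t) ^ (2*β) / t)

/-- The robust log-subdyadic square function `g*_{log,γ,β,λ}(f)(x)`. -/
def gStarLog {d : ℕ} (γ β lam t₀ : ℝ) (φ f : Rd d → ℂ) (x : Rd d) : ℝ≥0∞ :=
  gStarLogSq γ β lam t₀ φ f x ^ (2⁻¹ : ℝ)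

/-- Hardy–Littlewood maximal operator (taking values in `ℝ≥0∞`). -/
def hlMaximal {d : ℕ} (w : Rd d → ℝ≥0∞) (x : Rd d) : ℝ≥0∞ :=
  ⨆ (r : ℝ) (_ : 0 < r), (volume (ball x r))⁻¹ * ∫⁻ y in ball x r, w y

/-- Smooth averaging `A_t w = η_t * w` at scale `t`. -/
def smoothAvg {d : ℕ} (η : Rd d → ℝ) (t : ℝ) (w : Rd d → ℝ≥0∞) (y : Rd d) : ℝ≥0∞ :=
  ∫⁻ z, ENNReal.ofReal ((t ^ d : ℝ)⁻¹ * η ((t⁻¹ : ℝ) • (y - z))) * w z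

/-- The logarithmic geometric maximal operator `M_{log,γ,β}`. -/
def logMaximal {d : ℕ} (γ β t₀ : ℝ) (η : Rd d → ℝ) (w : Rd d → ℝ≥0∞) (x : Rd d) : ℝ≥0∞ :=
  ⨆ (t : ℝ) (_ : 0 < t) (_ : t < t₀) (y : Rd d) (_ : dist y x ≤ aGamma γ t),
    ENNReal.ofReal (Real.log (1/t) ^ (-(2*β))) * smoothAvg η t w y

/-- The Fourier multiplier operator `T_m f = 𝓕⁻¹(m · 𝓕 f)`. -/
def Tmult {d : ℕ} (m : Rd d → ℂ) (f : Rd d → ℂ) : Rd d → ℂ :=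
  𝓕⁻ (fun ξ => m ξ * 𝓕 f ξ)

/-- The logarithmic model multiplier `m_{γ,β}(ξ) = (log(e+|ξ|))^{-β} e^{i (log(e+|ξ|))^γ}`. -/
def modelMult (d : ℕ) (γ β : ℝ) (ξ : Rd d) : ℂ :=
  ((Real.log (Real.exp 1 + ‖ξ‖) ^ (-β) : ℝ) : ℂ) *
    Complex.exp (Complex.I * ((Real.log (Real.exp 1 + ‖ξ‖) ^ γ : ℝ) : ℂ))

/-- A nonnegative real weight regarded as an `ℝ≥0∞`-valued function. -/
def ofWeight {d : ℕ} (w : Rd d → ℝ) : Rd d → ℝ≥0∞ := fun x => ENNReal.ofReal (w x)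

/-- The lattice point `ℓ ∈ ℤ^d` viewed as a point of `ℝ^d`. -/
def latticePt (d : ℕ) (m : Fin d → ℤ) : Rd d :=
  (EuclideanSpace.equiv (Fin d) ℝ).symm (fun i => (m i : ℝ))

/-!
Cover `ℝ^d` by the balls `B(y, 2^k t)`. Schwartz decay bounds the kernel `η_t(y - ·)` by
`C t^{-d} 2^{-(d+1)k}` outside `B(y, 2^{k-1} t)`, so `(η_t * w)(y)` is at most
`∑ₖ C t^{-d} 2^{-(d+1)k} ∫_{B(y, 2^k t)} w`. With `ρ = (log 1/t)^{γ-1} ≥ 1` and `|y - x| ≤ t ρ`,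
each ball `B(y, 2^k t)` lies in `B(x, 2ρ · 2^k t)`, and Hölder's inequality bounds the mean of
`w` over it by `((2ρ)^d M(w^s)(x))^{1/s}`. The `k`-th term is therefore
`C |B(0,1)| 2^{-k} ((2ρ)^d M(w^s)(x))^{1/s}`, and the series sums to the claim.
-/

theorem SchwartzMap.exists_dyadic_decay {E F : Type*} [NormedAddCommGroup E] [NormedSpace ℝ E]
    [NormedAddCommGroup F] [NormedSpace ℝ F] (f : SchwartzMap E F) (n : ℕ) :
    ∃ C, 0 < C ∧ ∀ u, ∃ k : ℕ, ‖u‖ < 2 ^ k ∧ ‖f u‖ ≤ C * ((2 : ℝ) ^ n)⁻¹ ^ k := by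
  obtain ⟨C₀, hC₀, hbound₀⟩ := f.decay 0 0
  obtain ⟨C₁, hC₁, hbound₁⟩ := f.decay n 0
  simp only [pow_zero, one_mul, norm_iteratedFDeriv_zero] at hbound₀ hbound₁
  refine ⟨max C₀ C₁ * 2 ^ n, by positivity, fun u => ?_⟩
  rcases lt_or_ge ‖u‖ 1 with hu | hu
  · refine ⟨0, by simpa using hu, ?_⟩
    calc ‖f u‖ ≤ max C₀ C₁ := (hbound₀ u).trans (le_max_left _ _)
      _ ≤ max C₀ C₁ * 2 ^ n * ((2 : ℝ) ^ n)⁻¹ ^ 0 := by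
        rw [pow_zero, mul_one]
        exact le_mul_of_one_le_right (by positivity) (one_le_pow₀ one_le_two)
  · obtain ⟨j, hj, hj'⟩ := exists_nat_pow_near hu one_lt_two
    refine ⟨j + 1, hj', ?_⟩
    have h2j : (0 : ℝ) < (2 ^ j) ^ n := by positivity
    calc ‖f u‖ ≤ C₁ / (2 ^ j) ^ n := by
          rw [le_div_iff₀ h2j, mul_comm]
          exact (mul_le_mul_of_nonneg_right (pow_le_pow_left₀ (by positivity) hj n)
            (norm_nonneg _)).trans (hbound₁ u)
      _ ≤ max C₀ C₁ / (2 ^ j) ^ n := by gcongr; exact le_max_right _ _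
      _ = max C₀ C₁ * 2 ^ n * ((2 : ℝ) ^ n)⁻¹ ^ (j + 1) := by
        rw [← pow_mul, inv_pow, ← pow_mul]
        field_simp
        ring

theorem setLIntegral_le_rpow_mul_measure_rpow {α : Type*} [MeasurableSpace α] {μ : Measure α}
    {s : ℝ} (hs : 1 < s) {w : α → ℝ≥0∞} (hw : AEMeasurable w μ) (B : Set α) :
    ∫⁻ z in B, w z ∂μ ≤ (∫⁻ z in B, w z ^ s ∂μ) ^ (1 / s) * μ B ^ (1 - 1 / s) := by
  have hpq := Real.HolderConjugate.conjExponent hs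
  have h := ENNReal.lintegral_mul_le_Lp_mul_Lq (μ.restrict B) hpq hw.restrict
    (aemeasurable_const (b := 1))
  simp only [Pi.mul_apply, mul_one, ENNReal.one_rpow, setLIntegral_one] at h
  rwa [one_div s.conjExponent, ← hpq.one_sub_inv, ← one_div] at h

variable {d : ℕ}

theorem lintegral_ball_le_volume_mul_hlMaximal (w : Rd d → ℝ≥0∞) (x : Rd d) {R : ℝ}
    (hR : 0 < R) : ∫⁻ z in ball x R, w z ≤ volume (ball x R) * hlMaximal w x := by
  have hle : (volume (ball x R))⁻¹ * ∫⁻ z in ball x R, w z ≤ hlMaximal w x :=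
    le_iSup₂ (f := fun r (_ : 0 < r) => (volume (ball x r))⁻¹ * ∫⁻ z in ball x r, w z) R hR
  rwa [ENNReal.inv_mul_le_iff (measure_ball_pos volume x hR).ne' measure_ball_lt_top.ne] at hle

theorem volume_ball_eq_ofReal_mul_volume_ball {x y : Rd d} {r c : ℝ} (hr : 0 < r)
    (hc : 0 < c) : volume (ball x (c * r)) = ENNReal.ofReal (c ^ d) * volume (ball y r) := by
  rw [Measure.addHaar_ball_of_pos _ _ (by positivity), Measure.addHaar_ball_of_pos _ _ hr,
    finrank_euclideanSpace_fin, ← mul_assoc, ← ENNReal.ofReal_mul (by positivity), mul_pow]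

theorem lintegral_ball_le_of_subset {s : ℝ} (hs : 1 < s) {w : Rd d → ℝ≥0∞}
    (hw : AEMeasurable w volume) {x y : Rd d} {r c : ℝ} (hr : 0 < r) (hc : 0 < c)
    (hsub : ball y r ⊆ ball x (c * r)) :
    ∫⁻ z in ball y r, w z ≤
      volume (ball y r) * (ENNReal.ofReal (c ^ d) * hlMaximal (fun z => w z ^ s) x) ^ (1 / s) := by
  set V := volume (ball y r)
  have hV : V ≠ 0 := (measure_ball_pos volume y hr).ne'
  have hV' : V ≠ ∞ := measure_ball_lt_top.ne
  have hs₀ : 0 ≤ 1 / s := by positivity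
  calc ∫⁻ z in ball y r, w z
      ≤ (∫⁻ z in ball y r, w z ^ s) ^ (1 / s) * V ^ (1 - 1 / s) :=
        setLIntegral_le_rpow_mul_measure_rpow hs hw _
    _ ≤ (V * (ENNReal.ofReal (c ^ d) * hlMaximal (fun z => w z ^ s) x)) ^ (1 / s) *
          V ^ (1 - 1 / s) := by
        gcongr
        calc ∫⁻ z in ball y r, w z ^ s
            ≤ ∫⁻ z in ball x (c * r), w z ^ s := lintegral_mono_set hsub
          _ ≤ volume (ball x (c * r)) * hlMaximal (fun z => w z ^ s) x :=
            lintegral_ball_le_volume_mul_hlMaximal _ x (by positivity)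
          _ = _ := by rw [volume_ball_eq_ofReal_mul_volume_ball hr hc]; ring
    _ = V * (ENNReal.ofReal (c ^ d) * hlMaximal (fun z => w z ^ s) x) ^ (1 / s) := by
        rw [ENNReal.mul_rpow_of_nonneg _ _ hs₀, mul_right_comm, ← ENNReal.rpow_add _ _ hV hV',
          add_sub_cancel, ENNReal.rpow_one]

theorem smoothAvg_le_tsum_lintegral_ball (η : SchwartzMap (Rd d) ℝ) :
    ∃ C, 0 < C ∧ ∀ t, 0 < t → ∀ w : Rd d → ℝ≥0∞, AEMeasurable w volume → ∀ y,
      smoothAvg η t w y ≤ ∑' k : ℕ,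
        ENNReal.ofReal ((t ^ d)⁻¹ * (C * ((2 : ℝ) ^ (d + 1))⁻¹ ^ k)) *
          ∫⁻ z in ball y (2 ^ k * t), w z := by
  obtain ⟨C, hC, hdecay⟩ := η.exists_dyadic_decay (d + 1)
  refine ⟨C, hC, fun t ht w hw y => ?_⟩
  set c : ℕ → ℝ≥0∞ := fun k => ENNReal.ofReal ((t ^ d)⁻¹ * (C * ((2 : ℝ) ^ (d + 1))⁻¹ ^ k))
  have hkernel : ∀ z, ENNReal.ofReal ((t ^ d)⁻¹ * η (t⁻¹ • (y - z))) * w z ≤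
      ∑' k, (ball y (2 ^ k * t)).indicator (fun z => c k * w z) z := by
    intro z
    obtain ⟨k, hk, hηk⟩ := hdecay (t⁻¹ • (y - z))
    have hz : z ∈ ball y (2 ^ k * t) := by
      rw [norm_smul, Real.norm_of_nonneg (inv_nonneg.2 ht.le), inv_mul_lt_iff₀ ht] at hk
      rwa [mem_ball, dist_comm, dist_eq_norm, mul_comm]
    refine le_trans ?_ (ENNReal.le_tsum k)
    rw [indicator_of_mem hz]
    gcongr
    exact ENNReal.ofReal_le_ofReal (by gcongr; exact (Real.le_norm_self _).trans hηk)
  calc smoothAvg η t w y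
      ≤ ∫⁻ z, ∑' k, (ball y (2 ^ k * t)).indicator (fun z => c k * w z) z :=
        lintegral_mono hkernel
    _ = ∑' k, c k * ∫⁻ z in ball y (2 ^ k * t), w z := by
        rw [lintegral_tsum fun k => (hw.const_mul _).indicator measurableSet_ball]
        congr 1 with k
        rw [lintegral_indicator measurableSet_ball, lintegral_const_mul' _ _ ENNReal.ofReal_ne_top]

theorem ball_subset_ball_two_mul_of_dist_le {x y : Rd d} {t ρ a : ℝ} (ht : 0 < t) (hρ : 1 ≤ ρ)
    (ha : 1 ≤ a) (hyx : dist y x ≤ t * ρ) : ball y (a * t) ⊆ ball x (2 * ρ * (a * t)) := by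
  intro z hz
  rw [mem_ball] at hz ⊢
  have h₁ : a * t ≤ a * t * ρ := le_mul_of_one_le_right (by positivity) hρ
  have h₂ : t * ρ ≤ a * (t * ρ) := le_mul_of_one_le_left (by positivity) ha
  calc dist z x ≤ dist z y + dist y x := dist_triangle _ _ _
    _ < a * t + t * ρ := add_lt_add_of_lt_of_le hz hyx
    _ ≤ 2 * ρ * (a * t) := by linarith

theorem ofReal_mul_volume_ball_two_pow {C t : ℝ} (hC : 0 ≤ C) (ht : 0 < t) {y : Rd d} {k : ℕ} :
    ENNReal.ofReal ((t ^ d)⁻¹ * (C * ((2 : ℝ) ^ (d + 1))⁻¹ ^ k)) * volume (ball y (2 ^ k * t)) =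
      ENNReal.ofReal C * volume (ball (0 : Rd d) 1) * 2⁻¹ ^ k := by
  have hscale : (t ^ d)⁻¹ * (C * ((2 : ℝ) ^ (d + 1))⁻¹ ^ k) * (2 ^ k * t) ^ d = 2⁻¹ ^ k * C := by
    rw [pow_succ, mul_inv, mul_pow, mul_pow, inv_pow, ← pow_mul, ← pow_mul, mul_comm d k]
    field_simp
  rw [Measure.addHaar_ball_of_pos _ _ (by positivity), finrank_euclideanSpace_fin, ← mul_assoc,
    ← ENNReal.ofReal_mul (by positivity), hscale, ENNReal.ofReal_mul (by positivity),
    ENNReal.ofReal_pow (by norm_num), ENNReal.ofReal_inv_of_pos two_pos, ENNReal.ofReal_ofNat]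
  ring

theorem smoothAvg_le_hlMaximal_of_dist_le (η : SchwartzMap (Rd d) ℝ) {s : ℝ} (hs : 1 < s) :
    ∃ C, 0 < C ∧ ∀ t, 0 < t → ∀ ρ, 1 ≤ ρ → ∀ x y : Rd d, dist y x ≤ t * ρ →
      ∀ w : Rd d → ℝ≥0∞, AEMeasurable w volume →
        smoothAvg η t w y ≤
          ENNReal.ofReal (C * (ρ ^ d) ^ (1 / s)) * hlMaximal (fun z => w z ^ s) x ^ (1 / s) := by
  obtain ⟨C, hC, hsum⟩ := smoothAvg_le_tsum_lintegral_ball η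
  set V := volume (ball (0 : Rd d) 1)
  have hV : V ≠ ∞ := measure_ball_lt_top.ne
  have hV₀ : 0 < V.toReal := ENNReal.toReal_pos (measure_ball_pos volume _ one_pos).ne' hV
  refine ⟨2 * C * V.toReal * ((2 : ℝ) ^ d) ^ (1 / s), by positivity, ?_⟩
  intro t ht ρ hρ x y hyx w hw
  set M := hlMaximal (fun z => w z ^ s) x
  set X := (ENNReal.ofReal ((2 * ρ) ^ d) * M) ^ (1 / s) with hX
  have hterm : ∀ k : ℕ, ENNReal.ofReal ((t ^ d)⁻¹ * (C * ((2 : ℝ) ^ (d + 1))⁻¹ ^ k)) *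
        ∫⁻ z in ball y (2 ^ k * t), w z ≤ ENNReal.ofReal C * V * X * 2⁻¹ ^ k := by
    intro k
    have hr : (0 : ℝ) < 2 ^ k * t := by positivity
    have hsub : ball y (2 ^ k * t) ⊆ ball x (2 * ρ * (2 ^ k * t)) :=
      ball_subset_ball_two_mul_of_dist_le ht hρ (one_le_pow₀ one_le_two) hyx
    calc ENNReal.ofReal ((t ^ d)⁻¹ * (C * ((2 : ℝ) ^ (d + 1))⁻¹ ^ k)) *
          ∫⁻ z in ball y (2 ^ k * t), w z
        ≤ ENNReal.ofReal ((t ^ d)⁻¹ * (C * ((2 : ℝ) ^ (d + 1))⁻¹ ^ k)) *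
          (volume (ball y (2 ^ k * t)) * X) := by
          gcongr
          exact lintegral_ball_le_of_subset hs hw hr (by positivity) hsub
      _ = ENNReal.ofReal C * V * X * 2⁻¹ ^ k := by
          rw [← mul_assoc, ofReal_mul_volume_ball_two_pow hC.le ht]
          ring
  calc smoothAvg η t w y
      ≤ ∑' k : ℕ, ENNReal.ofReal C * V * X * 2⁻¹ ^ k :=
        (hsum t ht w hw y).trans (ENNReal.tsum_le_tsum hterm)
    _ = ENNReal.ofReal C * V * X * 2 := by rw [ENNReal.tsum_mul_left, ENNReal.tsum_geometric_two]
    _ = _ := by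
        have hs₀ : 0 ≤ 1 / s := by positivity
        rw [hX, ENNReal.mul_rpow_of_nonneg _ _ hs₀,
          ENNReal.ofReal_rpow_of_nonneg (by positivity) hs₀, mul_pow,
          Real.mul_rpow (by positivity) (by positivity), ENNReal.ofReal_mul (by positivity),
          ENNReal.ofReal_mul (by positivity), ENNReal.ofReal_mul (by positivity),
          ENNReal.ofReal_mul (by positivity), ENNReal.ofReal_mul zero_le_two,
          ENNReal.ofReal_toReal hV, ENNReal.ofReal_ofNat]
        ring

theorem one_lt_log_one_div {t : ℝ} (ht : 0 < t) (ht' : t < (Real.exp 1)⁻¹) :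
    1 < Real.log (1 / t) := by
  rwa [Real.lt_log_iff_exp_lt (by positivity), lt_one_div (Real.exp_pos 1) ht, one_div]

theorem smooth_average_pointwise_bound_general (d : ℕ) (γ s t₀ : ℝ)
    (hγ : 1 < γ) (hs : 1 < s) (ht₀' : t₀ < (Real.exp 1)⁻¹)
    (η : SchwartzMap (Rd d) ℝ) :
    ∃ C : ℝ, 0 < C ∧
      ∀ t : ℝ, 0 < t → t < t₀ →
      ∀ x y : Rd d, dist y x ≤ aGamma γ t →
      ∀ w : Rd d → ℝ, (∀ z, 0 ≤ w z) → LocallyIntegrable w volume →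
        smoothAvg (⇑η) t (ofWeight w) y
          ≤ ENNReal.ofReal (C * Real.log (1/t) ^ ((d:ℝ) * (γ - 1) / s)) *
              (hlMaximal (fun z => ENNReal.ofReal (w z) ^ s) x) ^ (1/s) := by
  obtain ⟨C, hC, hbound⟩ := smoothAvg_le_hlMaximal_of_dist_le η hs
  refine ⟨C, hC, fun t ht ht' x y hyx w _ hw => ?_⟩
  have hlog : 1 < Real.log (1 / t) := one_lt_log_one_div ht (ht'.trans ht₀')
  have hρ : 1 ≤ Real.log (1 / t) ^ (γ - 1) := Real.one_le_rpow hlog.le (by linarith)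
  have hexp : ((Real.log (1 / t) ^ (γ - 1)) ^ d) ^ (1 / s) =
      Real.log (1 / t) ^ ((d : ℝ) * (γ - 1) / s) := by
    rw [← Real.rpow_natCast, ← Real.rpow_mul (by positivity), ← Real.rpow_mul (by positivity)]
    ring_nf
  have hw' : AEMeasurable (ofWeight w) volume :=
    ENNReal.measurable_ofReal.comp_aemeasurable hw.aestronglyMeasurable.aemeasurable
  have hbound' := hbound t ht _ hρ x y hyx _ hw'
  rw [hexp] at hbound'
  exact hbound'

/-- Pointwise control of smooth averages over logarithmic approach
regions by the `s`-maximal function. -/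
theorem smooth_average_pointwise_bound (d : ℕ) (hd : 1 ≤ d) (γ s t₀ : ℝ)
    (hγ : 1 < γ) (hs : 1 < s) (ht₀ : 0 < t₀) (ht₀' : t₀ < (Real.exp 1)⁻¹)
    (η : SchwartzMap (Rd d) ℝ) (hη_nonneg : ∀ x, 0 ≤ η x) :
    ∃ C : ℝ, 0 < C ∧
      ∀ t : ℝ, 0 < t → t < t₀ →
      ∀ x y : Rd d, dist y x ≤ aGamma γ t →
      ∀ w : Rd d → ℝ, (∀ z, 0 ≤ w z) → LocallyIntegrable w volume →
        smoothAvg (⇑η) t (ofWeight w) y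
          ≤ ENNReal.ofReal (C * Real.log (1/t) ^ ((d:ℝ) * (γ - 1) / s)) *
              (hlMaximal (fun z => ENNReal.ofReal (w z) ^ s) x) ^ (1/s) :=
  smooth_average_pointwise_bound_general d γ s t₀ hγ hs ht₀' η
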